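/- For any orthohedral set S and any k, the group G_k(S) of pei-permutations of S of rank ≤ k acts on the set Γ^k(S) of rank-k germs of S by finitary permutations, and this action is highly transitive: every bijection f: F → F' between finite subsets of Γ^k(S) is induced by some element of G_k(S). -/

import Mathlib

open Pointwise

namespace PeiPaper

/-- Points of the face of the standard orthant spanned by the canonical basis vectors in `Y`. -/
def stdFace (N : ℕ) (Y : Finset (Fin N)) : Set (Fin N → ℤ) :=
  {v | (∀ i, 0 ≤ v i) ∧ ∀ i, i ∉ Y → v i = 0}

/-- Integral orthogonal matrix. -/
def IsOrthMat {N : ℕ} (A : Matrix (Fin N) (Fin N) ℤ) : Prop :=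
  A * A.transpose = 1

/-- `L` is an integral orthant of rank `k` in `ℤ^N`: an affine-orthogonal image of a
rank-`k` face of the standard orthant. -/
def IsOrthantOfRank {N : ℕ} (L : Set (Fin N → ℤ)) (k : ℕ) : Prop :=
  ∃ (a : Fin N → ℤ) (A : Matrix (Fin N) (Fin N) ℤ) (Y : Finset (Fin N)),
    IsOrthMat A ∧ Y.card = k ∧ L = (fun v => a + A.mulVec v) '' stdFace N Y

def IsOrthant {N : ℕ} (L : Set (Fin N → ℤ)) : Prop := ∃ k, IsOrthantOfRank L k

/-- `S` is orthohedral: a finite union of integral orthants. -/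
def IsOrthohedral {N : ℕ} (S : Set (Fin N → ℤ)) : Prop :=
  ∃ 𝓛 : Set (Set (Fin N → ℤ)), 𝓛.Finite ∧ (∀ L ∈ 𝓛, IsOrthant L) ∧ S = ⋃₀ 𝓛

/-- The rank of a set: the maximal rank of an orthant contained in it. -/
noncomputable def orthRank {N : ℕ} (S : Set (Fin N → ℤ)) : ℕ :=
  sSup {k | ∃ L, IsOrthantOfRank L k ∧ L ⊆ S}

/-- Commensurability: the intersection is nonempty and has the same rank as both sets. -/
def Commensurable {N : ℕ} (L L' : Set (Fin N → ℤ)) : Prop :=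
  (L ∩ L').Nonempty ∧ orthRank L = orthRank (L ∩ L') ∧ orthRank L' = orthRank (L ∩ L')

/-- The rank-`k` orthants contained in `S`. -/
def germSet {N : ℕ} (S : Set (Fin N → ℤ)) (k : ℕ) : Set (Set (Fin N → ℤ)) :=
  {L | IsOrthantOfRank L k ∧ L ⊆ S}

/-- The rank-`k` germs of `S`: commensurability classes of rank-`k` orthants of `S`. -/
def Germ {N : ℕ} (S : Set (Fin N → ℤ)) (k : ℕ) : Type _ :=
  Quot (fun L L' : germSet S k => Commensurable L.1 L'.1)

def germOf {N : ℕ} (S : Set (Fin N → ℤ)) (k : ℕ) (L : germSet S k) : Germ S k :=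
  Quot.mk _ L

/-- The number of rank-`k` germs of `S` (as a natural number; `0` if infinite). -/
noncomputable def heightAt {N : ℕ} (S : Set (Fin N → ℤ)) (k : ℕ) : ℕ :=
  Nat.card (Germ S k)

/-- The height of an orthohedral set: the number of germs of maximal rank. -/
noncomputable def height {N : ℕ} (S : Set (Fin N → ℤ)) : ℕ :=
  heightAt S (orthRank S)

/-- `f` is (the restriction of) an isometry of `ℤ^N` on `L`. -/
def IsometricOn {N : ℕ} (f : (Fin N → ℤ) → (Fin N → ℤ)) (L : Set (Fin N → ℤ)) : Prop :=
  ∃ (a : Fin N → ℤ) (A : Matrix (Fin N) (Fin N) ℤ),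
    IsOrthMat A ∧ ∀ x ∈ L, f x = a + A.mulVec x

/-- `f` is (the restriction of) a translation on `L`. -/
def TranslationOn {N : ℕ} (f : (Fin N → ℤ) → (Fin N → ℤ)) (L : Set (Fin N → ℤ)) : Prop :=
  ∃ a : Fin N → ℤ, ∀ x ∈ L, f x = a + x

/-- `f` is a piecewise-Euclidean-isometric map on `S`. -/
def IsPeiMapOn {N : ℕ} (S : Set (Fin N → ℤ)) (f : (Fin N → ℤ) → (Fin N → ℤ)) : Prop :=
  ∃ 𝓛 : Set (Set (Fin N → ℤ)), 𝓛.Finite ∧ (∀ L ∈ 𝓛, IsOrthant L) ∧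
    S = ⋃₀ 𝓛 ∧ 𝓛.PairwiseDisjoint id ∧ ∀ L ∈ 𝓛, IsometricOn f L

/-- `f` is a piecewise-Euclidean-translation map on `S`. -/
def IsPetMapOn {N : ℕ} (S : Set (Fin N → ℤ)) (f : (Fin N → ℤ) → (Fin N → ℤ)) : Prop :=
  ∃ 𝓛 : Set (Set (Fin N → ℤ)), 𝓛.Finite ∧ (∀ L ∈ 𝓛, IsOrthant L) ∧
    S = ⋃₀ 𝓛 ∧ 𝓛.PairwiseDisjoint id ∧ ∀ L ∈ 𝓛, TranslationOn f L

def IsPeiIso {N : ℕ} (S S' : Set (Fin N → ℤ)) (f : (Fin N → ℤ) → (Fin N → ℤ)) : Prop :=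
  IsPeiMapOn S f ∧ Set.InjOn f S ∧ f '' S = S'

def PeiIsomorphic {N : ℕ} (S S' : Set (Fin N → ℤ)) : Prop := ∃ f, IsPeiIso S S' f

def IsPetIso {N : ℕ} (S S' : Set (Fin N → ℤ)) (f : (Fin N → ℤ) → (Fin N → ℤ)) : Prop :=
  IsPetMapOn S f ∧ Set.InjOn f S ∧ f '' S = S'

def PetIsomorphic {N : ℕ} (S S' : Set (Fin N → ℤ)) : Prop := ∃ f, IsPetIso S S' f

/-- A pei-permutation of `S`: a permutation of `ℤ^N` supported on `S` which is pei on `S`. -/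
def IsPeiPerm {N : ℕ} (S : Set (Fin N → ℤ)) (g : Equiv.Perm (Fin N → ℤ)) : Prop :=
  IsPeiMapOn S ⇑g ∧ ∀ x ∉ S, g x = x

/-- The element `g` has rank at most `k`: it is supported on an orthohedral set of rank `≤ k`. -/
def rankLE {N : ℕ} (g : Equiv.Perm (Fin N → ℤ)) (k : ℕ) : Prop :=
  ∃ T : Set (Fin N → ℤ), IsOrthohedral T ∧ orthRank T ≤ k ∧ ∀ x ∉ T, g x = x

/-- `g` fixes every rank-`k` germ of `S`. -/
def FixesGerm {N : ℕ} (S : Set (Fin N → ℤ)) (k : ℕ) (g : Equiv.Perm (Fin N → ℤ)) : Prop :=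
  ∀ L, IsOrthantOfRank L k → L ⊆ S →
    ∃ L', IsOrthantOfRank L' k ∧ L' ⊆ L ∧ Commensurable L L' ∧
      IsometricOn (⇑g) L' ∧ Commensurable (⇑g '' L') L

/-- `g` fixes every rank-`k` germ of `S` and acts on its tangent coset by a translation. -/
def TranslatesGerm {N : ℕ} (S : Set (Fin N → ℤ)) (k : ℕ) (g : Equiv.Perm (Fin N → ℤ)) : Prop :=
  ∀ L, IsOrthantOfRank L k → L ⊆ S →
    ∃ L' a, IsOrthantOfRank L' k ∧ L' ⊆ L ∧ Commensurable L L' ∧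
      (∀ x ∈ L', g x = a + x) ∧ Commensurable (⇑g '' L') L

/-- `σ` is the map induced by `g` on the rank-`k` germs of `S`. -/
def InducesGermMap {N : ℕ} (S : Set (Fin N → ℤ)) (k : ℕ) (g : Equiv.Perm (Fin N → ℤ))
    (σ : Germ S k → Germ S k) : Prop :=
  ∀ L : germSet S k, ∃ (L'' : Set (Fin N → ℤ)) (M : germSet S k),
    IsOrthantOfRank L'' k ∧ L'' ⊆ L.1 ∧ Commensurable L.1 L'' ∧
    M.1 = ⇑g '' L'' ∧ σ (germOf S k L) = germOf S k M

/-- A finitary permutation which is even (has sign `1` on a finite invariant subset). -/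
def IsEvenFinitary {α : Type*} (σ : Equiv.Perm α) : Prop :=
  ∃ (F : Finset α) (σF : Equiv.Perm F),
    (∀ a ∉ F, σ a = a) ∧ (∀ a : F, σ (a : α) = (σF a : α)) ∧
    @Equiv.Perm.sign F (Classical.decEq _) inferInstance σF = 1

/-- `g` induces an even finitary permutation on the rank-`k` germs of `S`. -/
def IsEvenOnGerms {N : ℕ} (S : Set (Fin N → ℤ)) (k : ℕ) (g : Equiv.Perm (Fin N → ℤ)) : Prop :=
  ∃ σ : Equiv.Perm (Germ S k), InducesGermMap S k g ⇑σ ∧ IsEvenFinitary σ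

/-- Ordering of germs (of arbitrary ranks): `p ≤ q` if they have representatives `L ⊆ L'`. -/
def germLE {N : ℕ} (S : Set (Fin N → ℤ)) (p q : Σ k, Germ S k) : Prop :=
  ∃ (L : germSet S p.1) (L' : germSet S q.1),
    germOf S p.1 L = p.2 ∧ germOf S q.1 L' = q.2 ∧ L.1 ⊆ L'.1

/-- A maximal germ of `S`. -/
def IsMaxGerm {N : ℕ} (S : Set (Fin N → ℤ)) (p : Σ k, Germ S k) : Prop :=
  ∀ q, germLE S p q → germLE S q p

/-- A `0`-based orthant. -/
def IsBasedOrthant {N : ℕ} (L0 : Set (Fin N → ℤ)) : Prop :=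
  ∃ (A : Matrix (Fin N) (Fin N) ℤ) (Y : Finset (Fin N)),
    IsOrthMat A ∧ L0 = (fun v => A.mulVec v) '' stdFace N Y

/-- Two (oriented) parallel orthants. -/
def ParallelOrthants {N : ℕ} (L L' : Set (Fin N → ℤ)) : Prop :=
  ∃ a : Fin N → ℤ, L' = a +ᵥ L

/-- The indicator image `S_τ` of `S`: the union of the `0`-based parallel translates of
the orthants contained in `S`. -/
def indicatorImage {N : ℕ} (S : Set (Fin N → ℤ)) : Set (Fin N → ℤ) :=
  ⋃₀ {L0 | IsBasedOrthant L0 ∧ ∃ a : Fin N → ℤ, (a +ᵥ L0) ⊆ S}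

/-- The height function `h_S`: the number of maximal germs of `S` whose indicator is `L0`. -/
noncomputable def hFun {N : ℕ} (S : Set (Fin N → ℤ)) (L0 : Set (Fin N → ℤ)) : ℕ :=
  Nat.card {p : Σ k, Germ S k //
    IsMaxGerm S p ∧ ∃ L : germSet S p.1, germOf S p.1 L = p.2 ∧ ∃ a : Fin N → ℤ, L.1 = a +ᵥ L0}

/-- `S` is quasi-normal: the maximal based orthants of `S_τ` are exactly the support of `h_S`. -/
def QuasiNormal {N : ℕ} (S : Set (Fin N → ℤ)) : Prop :=
  ∀ L0 : Set (Fin N → ℤ),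
    (IsBasedOrthant L0 ∧ L0 ⊆ indicatorImage S ∧
      ∀ L1, IsBasedOrthant L1 → L1 ⊆ indicatorImage S → L0 ⊆ L1 → L1 ⊆ L0)
    ↔ (IsBasedOrthant L0 ∧ 0 < hFun S L0)

/-- The germ `q` of `S'` is the image of the germ `p` of `S` under the injective pei-map `f`. -/
def GermMapsTo {N : ℕ} (f : (Fin N → ℤ) → (Fin N → ℤ)) (S S' : Set (Fin N → ℤ))
    (p : Σ k, Germ S k) (q : Σ k, Germ S' k) : Prop :=
  p.1 = q.1 ∧ ∃ (L : germSet S p.1) (L'' : Set (Fin N → ℤ)) (M : germSet S' q.1),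
    germOf S p.1 L = p.2 ∧ IsOrthantOfRank L'' p.1 ∧ L'' ⊆ L.1 ∧ Commensurable L.1 L'' ∧
    M.1 = f '' L'' ∧ germOf S' q.1 M = q.2

/-- A stack of `h` parallel rank-`n` orthants. -/
def IsStack {N : ℕ} (S : Set (Fin N → ℤ)) (n h : ℕ) : Prop :=
  ∃ (L0 : Set (Fin N → ℤ)) (a : Fin h → (Fin N → ℤ)),
    IsOrthantOfRank L0 n ∧
    (Pairwise fun i j => Disjoint (a i +ᵥ L0) (a j +ᵥ L0)) ∧
    S = ⋃ i, a i +ᵥ L0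

/-- A coordinate half-space of `ℤ^N`. -/
def IsHalfSpace {N : ℕ} (H : Set (Fin N → ℤ)) : Prop :=
  ∃ (i : Fin N) (c : ℤ), H = {x | x i ≤ c} ∨ H = {x | c ≤ x i}

/-- The canonical embedding `ℤ^N → ℤ^{N+1}`. -/
def emb (N : ℕ) (x : Fin N → ℤ) : Fin (N + 1) → ℤ :=
  fun i => if h : (i : ℕ) < N then x ⟨i, h⟩ else 0

/-- The sum of all matrix entries of a finitely supported family of vectors. -/
noncomputable def totalSum (k : ℕ) (Γ : Type*) : (Γ →₀ (Fin k → ℤ)) →+ ℤ :=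
  Finsupp.liftAddHom (fun _ => ∑ i : Fin k, Pi.evalAddMonoidHom (fun _ => ℤ) i)

/-- The clique (flag) complex of a graph. -/
def cliqueComplex {V : Type*} (G : SimpleGraph V) : Set (Finset V) :=
  {s | s.Nonempty ∧ G.IsClique (s : Set V)}

/-- The geometric realization of a simplicial complex on vertex set `V`. -/
def realization {V : Type*} (K : Set (Finset V)) : Set (V → ℝ) :=
  {f | (∀ v, 0 ≤ f v) ∧ ∃ s ∈ K, Function.support f ⊆ ↑s ∧ ∑ v ∈ s, f v = 1}

/-- A wedge (bouquet) of `n`-spheres indexed by `ι`, with basepoint `b`. -/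
noncomputable def wedgeSpheres (ι : Type) (n : ℕ)
    (b : Metric.sphere (0 : EuclideanSpace ℝ (Fin (n + 1))) 1) : Type :=
  Quot (fun p q : Unit ⊕ (ι × Metric.sphere (0 : EuclideanSpace ℝ (Fin (n + 1))) 1) =>
    (Sum.elim (fun _ => True) (fun pr => pr.2 = b) p) ∧
    (Sum.elim (fun _ => True) (fun qr => qr.2 = b) q))

noncomputable instance (ι : Type) (n : ℕ) (b : Metric.sphere (0 : EuclideanSpace ℝ (Fin (n + 1))) 1) :
    TopologicalSpace (wedgeSpheres ι n b) :=
  letI : TopologicalSpace ι := ⊥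
  instTopologicalSpaceQuot

/-!
In suitable coordinates every orthant is a product of points and half-lines (a cell), so that
inclusion, rank and commensurability of orthants can be decided one coordinate at a time. Two
facts drive the proof: a rank-`k` orthant `L` has, for any finite family of orthants, a rank-`k`
suborthant lying inside or outside each member; and the rank-`k` suborthants of `L` form a filter
base. By the first, a pei-permutation `g` is isometric on a rank-`k` suborthant `L'` of `L`, and
`[L] ↦ [g L']` is well defined by the second; `g⁻¹` gives the inverse map. Germs with a rank-`k`
suborthant off the support of `g` are fixed, and the rest are germs of the finitely many rank-`k`
orthants of the support. For high transitivity, choose pairwise disjoint representatives of the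
germs in `F ∪ F'`, send them onto each other by affine isometries following a permutation that
extends `F ≃ F'`, and extend by the identity; a grid refining all orthants involved shows that
this map is pei on `S`.
-/

section Cells

/-- `(c, none)` stands for the point `c`, `(c, some true)` for `[c, ∞)` and `(c, some false)`
for `(-∞, c]`. -/
abbrev Ray := ℤ × Option Bool

def raySet : Ray → Set ℤ
  | (c, none) => {c}
  | (c, some true) => Set.Ici c
  | (c, some false) => Set.Iic c

lemma raySet_nonempty (r : Ray) : (raySet r).Nonempty := by
  obtain ⟨c, _ | _ | _⟩ := r <;> exact ⟨c, by simp [raySet]⟩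

def deepenRay : Ray → ℤ → Ray
  | (c, none), _ => (c, none)
  | (c, some true), m => (max c m, some true)
  | (c, some false), m => (min c m, some false)

lemma deepenRay_snd (r : Ray) (m : ℤ) : (deepenRay r m).2 = r.2 := by
  obtain ⟨c, _ | _ | _⟩ := r <;> rfl

lemma raySet_deepenRay_subset (r : Ray) (m : ℤ) : raySet (deepenRay r m) ⊆ raySet r := by
  obtain ⟨c, _ | _ | _⟩ := r <;> intro n hn <;> simp [deepenRay, raySet] at hn ⊢ <;> omega

lemma snd_eq_of_raySet_subset {r r' : Ray} (h : raySet r ⊆ raySet r') (hr : r.2.isSome) :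
    r.2 = r'.2 := by
  obtain ⟨c, _ | _ | _⟩ := r
  · simp at hr
  · obtain ⟨c', _ | _ | _⟩ := r' <;> first
    | rfl
    | have := h (show min c c' - 1 ∈ raySet (c, some false) by simp [raySet])
      simp [raySet] at this <;> omega
  · obtain ⟨c', _ | _ | _⟩ := r' <;> first
    | rfl
    | have := h (show max c c' + 1 ∈ raySet (c, some true) by simp [raySet]; omega)
      simp [raySet] at this <;> omega

lemma raySet_deepenRay_subset_of_snd_eq {r₁ r₂ r : Ray} (h₁ : raySet r₁ ⊆ raySet r)
    (h₂ : raySet r₂ ⊆ raySet r) (e₁ : r₁.2 = r.2) (e₂ : r₂.2 = r.2) :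
    raySet (deepenRay r₁ r₂.1) ⊆ raySet r₂ := by
  obtain ⟨c, _ | _ | _⟩ := r <;> obtain ⟨c₁, _ | _ | _⟩ := r₁ <;> obtain ⟨c₂, _ | _ | _⟩ := r₂ <;>
    simp only [reduceCtorEq, Option.some.injEq, Bool.false_eq_true, Bool.true_eq_false] at e₁ e₂ <;>
    intro n hn <;> simp [raySet, deepenRay] at h₁ h₂ hn ⊢ <;> omega

lemma exists_deepenRay_subset_or_disjoint (r r' : Ray) :
    ∃ m, raySet (deepenRay r m) ⊆ raySet r' ∨ Disjoint (raySet (deepenRay r m)) (raySet r') := by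
  obtain ⟨c, _ | _ | _⟩ := r
  · by_cases hc : c ∈ raySet r'
    · exact ⟨0, Or.inl (Set.singleton_subset_iff.mpr hc)⟩
    · exact ⟨0, Or.inr (Set.disjoint_singleton_left.mpr hc)⟩
  all_goals
    obtain ⟨c', _ | _ | _⟩ := r' <;> first
    | exact ⟨c', Or.inl fun n hn => by simp [raySet, deepenRay] at hn ⊢; omega⟩
    | exact ⟨c' + 1, Or.inr (Set.disjoint_left.mpr fun n hn hn' => by
        simp [raySet, deepenRay] at hn hn'; omega)⟩
    | exact ⟨c' - 1, Or.inr (Set.disjoint_left.mpr fun n hn hn' => by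
        simp [raySet, deepenRay] at hn hn'; omega)⟩

/-- A cell is a product of rays: an orthant whose directions are coordinate directions. -/
abbrev CellDesc (N : ℕ) := Fin N → Ray

variable {N : ℕ}

def cellOf (ρ : CellDesc N) : Set (Fin N → ℤ) := Set.univ.pi fun i => raySet (ρ i)

def cellRank (ρ : CellDesc N) : ℕ := (Finset.univ.filter fun i => (ρ i).2.isSome).card

def deepen (ρ : CellDesc N) (b : Fin N → ℤ) : CellDesc N := fun i => deepenRay (ρ i) (b i)

lemma cellOf_nonempty (ρ : CellDesc N) : (cellOf ρ).Nonempty :=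
  Set.univ_pi_nonempty_iff.mpr fun _ => raySet_nonempty _

lemma cellOf_subset_cellOf_iff {ρ ρ' : CellDesc N} :
    cellOf ρ ⊆ cellOf ρ' ↔ ∀ i, raySet (ρ i) ⊆ raySet (ρ' i) := by
  simp [cellOf, Set.univ_pi_subset_univ_pi_iff, (raySet_nonempty _).ne_empty]

lemma disjoint_cellOf_iff {ρ ρ' : CellDesc N} :
    Disjoint (cellOf ρ) (cellOf ρ') ↔ ∃ i, Disjoint (raySet (ρ i)) (raySet (ρ' i)) :=
  Set.disjoint_univ_pi

lemma cellOf_deepen_subset (ρ : CellDesc N) (b : Fin N → ℤ) : cellOf (deepen ρ b) ⊆ cellOf ρ :=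
  cellOf_subset_cellOf_iff.mpr fun _ => raySet_deepenRay_subset _ _

lemma cellRank_deepen (ρ : CellDesc N) (b : Fin N → ℤ) : cellRank (deepen ρ b) = cellRank ρ := by
  simp [cellRank, deepen, deepenRay_snd]

lemma filter_isSome_subset_of_cellOf_subset {ρ ρ' : CellDesc N} (h : cellOf ρ ⊆ cellOf ρ') :
    Finset.univ.filter (fun i => (ρ i).2.isSome) ⊆
      Finset.univ.filter (fun i => (ρ' i).2.isSome) := by
  intro i
  simp only [Finset.mem_filter, Finset.mem_univ, true_and]
  intro hi
  rw [← snd_eq_of_raySet_subset (cellOf_subset_cellOf_iff.mp h i) hi]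
  exact hi

lemma cellRank_le_of_subset {ρ ρ' : CellDesc N} (h : cellOf ρ ⊆ cellOf ρ') :
    cellRank ρ ≤ cellRank ρ' :=
  Finset.card_le_card (filter_isSome_subset_of_cellOf_subset h)

lemma snd_eq_of_subset_of_cellRank_eq {ρ ρ' : CellDesc N} (h : cellOf ρ ⊆ cellOf ρ')
    (hrk : cellRank ρ = cellRank ρ') (i : Fin N) : (ρ i).2 = (ρ' i).2 := by
  have hfilter := Finset.eq_of_subset_of_card_le (filter_isSome_subset_of_cellOf_subset h) hrk.ge
  by_cases hi : (ρ i).2.isSome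
  · exact snd_eq_of_raySet_subset (cellOf_subset_cellOf_iff.mp h i) hi
  · have hi' : ¬ (ρ' i).2.isSome := by
      simpa [hi] using (Finset.ext_iff.mp hfilter i).not
    rw [Option.not_isSome_iff_eq_none] at hi hi'
    rw [hi, hi']

/-- Full-rank subcells of a cell form a filter base: deepening `μ₁` past the base point of `μ₂`
gives a common one. -/
lemma cellOf_deepen_subset_of_subset {μ₁ μ₂ ρ : CellDesc N} (h₁ : cellOf μ₁ ⊆ cellOf ρ)
    (h₂ : cellOf μ₂ ⊆ cellOf ρ) (e₁ : cellRank μ₁ = cellRank ρ) (e₂ : cellRank μ₂ = cellRank ρ) :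
    cellOf (deepen μ₁ fun i => (μ₂ i).1) ⊆ cellOf μ₂ :=
  cellOf_subset_cellOf_iff.mpr fun i => raySet_deepenRay_subset_of_snd_eq
    (cellOf_subset_cellOf_iff.mp h₁ i) (cellOf_subset_cellOf_iff.mp h₂ i)
    (snd_eq_of_subset_of_cellRank_eq h₁ e₁ i) (snd_eq_of_subset_of_cellRank_eq h₂ e₂ i)

lemma exists_deepen_subset_or_disjoint (ρ ρ' : CellDesc N) :
    ∃ b, cellOf (deepen ρ b) ⊆ cellOf ρ' ∨ Disjoint (cellOf (deepen ρ b)) (cellOf ρ') := by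
  choose m hm using fun i => exists_deepenRay_subset_or_disjoint (ρ i) (ρ' i)
  refine ⟨m, ?_⟩
  by_cases h : ∀ i, raySet (deepenRay (ρ i) (m i)) ⊆ raySet (ρ' i)
  · exact Or.inl (cellOf_subset_cellOf_iff.mpr h)
  · obtain ⟨i, hi⟩ := not_forall.mp h
    exact Or.inr (disjoint_cellOf_iff.mpr ⟨i, (hm i).resolve_left hi⟩)

lemma exists_subcell_subset_or_disjoint (ρ : CellDesc N) (𝓓 : Finset (CellDesc N)) :
    ∃ μ, cellRank μ = cellRank ρ ∧ cellOf μ ⊆ cellOf ρ ∧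
      ∀ ρ' ∈ 𝓓, cellOf μ ⊆ cellOf ρ' ∨ Disjoint (cellOf μ) (cellOf ρ') := by
  classical
  induction 𝓓 using Finset.induction_on with
  | empty => exact ⟨ρ, rfl, subset_rfl, by simp⟩
  | insert ρ' 𝓓 _ ih =>
    obtain ⟨μ, hrk, hsub, hμ⟩ := ih
    obtain ⟨b, hb⟩ := exists_deepen_subset_or_disjoint μ ρ'
    have hdeep := cellOf_deepen_subset μ b
    refine ⟨deepen μ b, (cellRank_deepen μ b).trans hrk, hdeep.trans hsub, ?_⟩
    rw [Finset.forall_mem_insert]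
    exact ⟨hb, fun ρ'' h => (hμ ρ'' h).imp hdeep.trans (Disjoint.mono_left hdeep)⟩

noncomputable def gridRays (M : ℤ) : Finset Ray :=
  insert (M + 1, some true) <| insert (-M - 1, some false) <|
    (Finset.Icc (-M) M).image fun c => (c, none)

lemma exists_mem_gridRays (M n : ℤ) : ∃ r ∈ gridRays M, n ∈ raySet r := by
  by_cases h₁ : M < n
  · exact ⟨(M + 1, some true), by simp [gridRays], by simp [raySet]; omega⟩
  by_cases h₂ : n < -M
  · exact ⟨(-M - 1, some false), by simp [gridRays], by simp [raySet]; omega⟩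
  · exact ⟨(n, none), by simp [gridRays]; omega, by simp [raySet]⟩

lemma eq_of_mem_gridRays {M n : ℤ} (hM : 0 ≤ M) {r r' : Ray} (hr : r ∈ gridRays M)
    (hr' : r' ∈ gridRays M) (hn : n ∈ raySet r) (hn' : n ∈ raySet r') : r = r' := by
  simp only [gridRays, Finset.mem_insert, Finset.mem_image, Finset.mem_Icc] at hr hr'
  rcases hr with rfl | rfl | ⟨c, hc, rfl⟩ <;> rcases hr' with rfl | rfl | ⟨c', hc', rfl⟩ <;>
    simp [raySet] at hn hn' ⊢ <;> omega

lemma gridRay_subset_or_disjoint {M : ℤ} {r r' : Ray} (hr : r ∈ gridRays M) (hr' : |r'.1| ≤ M) :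
    raySet r ⊆ raySet r' ∨ Disjoint (raySet r) (raySet r') := by
  simp only [gridRays, Finset.mem_insert, Finset.mem_image] at hr
  rcases hr with rfl | rfl | ⟨c, -, rfl⟩
  rotate_left 2
  · by_cases hc : c ∈ raySet r'
    · exact Or.inl (Set.singleton_subset_iff.mpr hc)
    · exact Or.inr (Set.disjoint_singleton_left.mpr hc)
  all_goals
    obtain ⟨c', _ | _ | _⟩ := r' <;> rw [abs_le] at hr' <;> first
    | exact Or.inl fun n hn => by simp [raySet] at hn ⊢; omega
    | exact Or.inr (Set.disjoint_left.mpr fun n hn hn' => by simp [raySet] at hn hn'; omega)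

lemma exists_cell_partition (𝓓 : Finset (CellDesc N)) :
    ∃ 𝓖 : Finset (CellDesc N), (∀ x, ∃ Q ∈ 𝓖, x ∈ cellOf Q) ∧
      (∀ Q ∈ 𝓖, ∀ Q' ∈ 𝓖, Q ≠ Q' → Disjoint (cellOf Q) (cellOf Q')) ∧
      ∀ Q ∈ 𝓖, ∀ ρ ∈ 𝓓, cellOf Q ⊆ cellOf ρ ∨ Disjoint (cellOf Q) (cellOf ρ) := by
  set M : ℤ := ∑ ρ ∈ 𝓓, ∑ i, |(ρ i).1|
  have hM : ∀ ρ ∈ 𝓓, ∀ i, |(ρ i).1| ≤ M := fun ρ hρ i => calc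
    |(ρ i).1| ≤ ∑ i, |(ρ i).1| :=
      Finset.single_le_sum (f := fun i => |(ρ i).1|) (fun _ _ => abs_nonneg _) (Finset.mem_univ i)
    _ ≤ M := Finset.single_le_sum (f := fun ρ : CellDesc N => ∑ i, |(ρ i).1|)
      (fun _ _ => Finset.sum_nonneg fun _ _ => abs_nonneg _) hρ
  have hM₀ : 0 ≤ M := Finset.sum_nonneg fun _ _ => Finset.sum_nonneg fun _ _ => abs_nonneg _
  refine ⟨Fintype.piFinset fun _ => gridRays M, fun x => ?_, fun Q hQ Q' hQ' hne => ?_,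
    fun Q hQ ρ hρ => ?_⟩
  · choose r hr hx using fun i => exists_mem_gridRays M (x i)
    exact ⟨r, Fintype.mem_piFinset.mpr hr, Set.mem_univ_pi.mpr hx⟩
  · obtain ⟨i, hi⟩ := Function.ne_iff.mp hne
    exact disjoint_cellOf_iff.mpr ⟨i, Set.disjoint_left.mpr fun n hn hn' =>
      hi (eq_of_mem_gridRays hM₀ (Fintype.mem_piFinset.mp hQ i) (Fintype.mem_piFinset.mp hQ' i)
        hn hn')⟩
  · by_cases h : ∀ i, raySet (Q i) ⊆ raySet (ρ i)
    · exact Or.inl (cellOf_subset_cellOf_iff.mpr h)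
    · obtain ⟨i, hi⟩ := not_forall.mp h
      exact Or.inr (disjoint_cellOf_iff.mpr ⟨i,
        (gridRay_subset_or_disjoint (Fintype.mem_piFinset.mp hQ i) (hM ρ hρ i)).resolve_left hi⟩)

end Cells

section Orthants

variable {N : ℕ}

open Matrix

def signedPermMatrix (τ : Equiv.Perm (Fin N)) (s : Fin N → ℤ) : Matrix (Fin N) (Fin N) ℤ :=
  Matrix.of fun i j => if j = τ i then s i else 0

lemma signedPermMatrix_mulVec (τ : Equiv.Perm (Fin N)) (s v : Fin N → ℤ) (i : Fin N) :
    (signedPermMatrix τ s *ᵥ v) i = s i * v (τ i) := by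
  simp [signedPermMatrix, mulVec, dotProduct]

lemma isOrthMat_signedPermMatrix (τ : Equiv.Perm (Fin N)) {s : Fin N → ℤ}
    (hs : ∀ i, s i = 1 ∨ s i = -1) : IsOrthMat (signedPermMatrix τ s) := by
  ext i i'
  simp only [signedPermMatrix, mul_apply, transpose_apply, of_apply, ite_mul, zero_mul, mul_ite,
    mul_zero, Finset.sum_ite_eq', Finset.mem_univ, if_true, one_apply, τ.injective.eq_iff]
  by_cases h : i = i'
  · subst h
    rcases hs i with h | h <;> simp [h]
  · simp [h, Ne.symm h]

lemma exists_single_of_sum_mul_self_eq_one {ι : Type*} [Fintype ι] {v : ι → ℤ}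
    (hv : ∑ j, v j * v j = 1) : ∃ j, (v j = 1 ∨ v j = -1) ∧ ∀ j' ≠ j, v j' = 0 := by
  classical
  obtain ⟨j, hj⟩ : ∃ j, v j ≠ 0 := by
    by_contra! h
    simp [h] at hv
  have hrest := Finset.add_sum_erase Finset.univ (fun j' => v j' * v j') (Finset.mem_univ j)
  have hnonneg : 0 ≤ ∑ j' ∈ Finset.univ.erase j, v j' * v j' :=
    Finset.sum_nonneg fun _ _ => mul_self_nonneg _
  have hpos : 0 < v j * v j := mul_self_pos.mpr hj
  have hone : v j * v j = 1 := by linarith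
  refine ⟨j, Int.eq_one_or_neg_one_of_mul_eq_one hone, fun j' hj' => ?_⟩
  have hzero : ∑ j' ∈ Finset.univ.erase j, v j' * v j' = 0 := by linarith
  exact mul_self_eq_zero.mp ((Finset.sum_eq_zero_iff_of_nonneg fun _ _ => mul_self_nonneg _).mp
    hzero j' (Finset.mem_erase.mpr ⟨hj', Finset.mem_univ _⟩))

lemma IsOrthMat.sum_mul_eq {A : Matrix (Fin N) (Fin N) ℤ} (hA : IsOrthMat A) (i i' : Fin N) :
    ∑ j, A i j * A i' j = if i = i' then 1 else 0 := by
  simpa [mul_apply, one_apply] using congrFun (congrFun hA i) i'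

lemma IsOrthMat.exists_eq_signedPermMatrix {A : Matrix (Fin N) (Fin N) ℤ} (hA : IsOrthMat A) :
    ∃ τ s, (∀ i, s i = 1 ∨ s i = -1) ∧ A = signedPermMatrix τ s := by
  have hrow i := exists_single_of_sum_mul_self_eq_one (by simpa using hA.sum_mul_eq i i)
  choose τ hτ₁ hτ₂ using hrow
  have hinj : Function.Injective τ := by
    intro i i' h
    by_contra hne
    have := hA.sum_mul_eq i i'
    rw [if_neg hne, Finset.sum_eq_single (τ i) (fun j _ hj => by rw [hτ₂ i j hj, zero_mul])
      (by simp), h] at this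
    rcases hτ₁ i with h₁ | h₁ <;> rcases hτ₁ i' with h₂ | h₂ <;> simp_all
  refine ⟨Equiv.ofBijective τ hinj.bijective_of_finite, fun i => A i (τ i), hτ₁, ?_⟩
  ext i j
  simp only [signedPermMatrix, of_apply, Equiv.ofBijective_apply]
  split_ifs with h
  · rw [h]
  · exact hτ₂ i j h

def orthantDesc (a : Fin N → ℤ) (τ : Equiv.Perm (Fin N)) (s : Fin N → ℤ) (Y : Finset (Fin N)) :
    CellDesc N :=
  fun i => (a i, if τ i ∈ Y then some (decide (s i = 1)) else none)

lemma image_stdFace_eq_cellOf (a : Fin N → ℤ) (τ : Equiv.Perm (Fin N)) {s : Fin N → ℤ}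
    (hs : ∀ i, s i = 1 ∨ s i = -1) (Y : Finset (Fin N)) :
    (fun v => a + signedPermMatrix τ s *ᵥ v) '' stdFace N Y = cellOf (orthantDesc a τ s Y) := by
  ext x
  simp only [Set.mem_image, cellOf, Set.mem_univ_pi, orthantDesc]
  constructor
  · rintro ⟨v, ⟨hv, hvY⟩, rfl⟩ i
    simp only [Pi.add_apply, signedPermMatrix_mulVec]
    split_ifs with hi
    · rcases hs i with h | h <;> simp [h, raySet, hv (τ i)]
    · simp [raySet, hvY _ hi]
  · intro hx
    refine ⟨fun j => s (τ.symm j) * (x (τ.symm j) - a (τ.symm j)), ⟨fun j => ?_, fun j hj => ?_⟩,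
      funext fun i => ?_⟩
    · have := hx (τ.symm j)
      rw [τ.apply_symm_apply] at this
      split_ifs at this
      · rcases hs (τ.symm j) with h | h <;> simp [h, raySet] at this ⊢ <;> omega
      · simp only [raySet, Set.mem_singleton_iff] at this
        simp [this]
    · have := hx (τ.symm j)
      rw [τ.apply_symm_apply, if_neg hj] at this
      simp only [raySet, Set.mem_singleton_iff] at this
      simp [this]
    · rcases hs i with h | h <;> simp [signedPermMatrix_mulVec, h]

lemma cellRank_orthantDesc (a : Fin N → ℤ) (τ : Equiv.Perm (Fin N)) (s : Fin N → ℤ)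
    (Y : Finset (Fin N)) : cellRank (orthantDesc a τ s Y) = Y.card :=
  Finset.card_equiv τ fun i => by by_cases hi : τ i ∈ Y <;> simp [orthantDesc, hi]

lemma IsOrthantOfRank.exists_cellOf_eq {L : Set (Fin N → ℤ)} {k : ℕ} (h : IsOrthantOfRank L k) :
    ∃ ρ, L = cellOf ρ ∧ cellRank ρ = k := by
  obtain ⟨a, A, Y, hA, rfl, rfl⟩ := h
  obtain ⟨τ, s, hs, rfl⟩ := hA.exists_eq_signedPermMatrix
  exact ⟨_, image_stdFace_eq_cellOf a τ hs Y, cellRank_orthantDesc a τ s Y⟩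

lemma isOrthantOfRank_cellOf (ρ : CellDesc N) : IsOrthantOfRank (cellOf ρ) (cellRank ρ) := by
  set s : Fin N → ℤ := fun i => if (ρ i).2 = some false then -1 else 1
  have hs : ∀ i, s i = 1 ∨ s i = -1 := fun i => by by_cases h : (ρ i).2 = some false <;> simp [s, h]
  have hρ :
      orthantDesc (fun i => (ρ i).1) 1 s (Finset.univ.filter fun i => (ρ i).2.isSome) = ρ := by
    funext i
    rcases h : ρ i with ⟨c, _ | _ | _⟩ <;> simp [orthantDesc, s, h]
  refine ⟨fun i => (ρ i).1, signedPermMatrix 1 s, Finset.univ.filter fun i => (ρ i).2.isSome,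
    isOrthMat_signedPermMatrix 1 hs, rfl, ?_⟩
  rw [image_stdFace_eq_cellOf _ 1 hs, hρ]

end Orthants

section OrthantRank

variable {N : ℕ} {L L' L₁ L₂ L₃ M₁ M₂ S T : Set (Fin N → ℤ)} {k m : ℕ}

lemma IsOrthantOfRank.le_card (h : IsOrthantOfRank L k) : k ≤ N := by
  obtain ⟨a, A, Y, -, rfl, -⟩ := h
  simpa using Y.card_le_univ

lemma IsOrthantOfRank.nonempty (h : IsOrthantOfRank L k) : L.Nonempty := by
  obtain ⟨ρ, rfl, -⟩ := h.exists_cellOf_eq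
  exact cellOf_nonempty ρ

lemma isOrthantOfRank_singleton (x : Fin N → ℤ) : IsOrthantOfRank {x} 0 := by
  have h := isOrthantOfRank_cellOf fun i => (x i, none)
  have hx : cellOf (fun i => (x i, none)) = {x} := by
    ext y
    simp [cellOf, raySet, funext_iff]
  simpa [hx, cellRank] using h

lemma bddAbove_orthantRanks (S : Set (Fin N → ℤ)) :
    BddAbove {k | ∃ L, IsOrthantOfRank L k ∧ L ⊆ S} :=
  ⟨N, fun _ ⟨_, hL, _⟩ => hL.le_card⟩

lemma le_orthRank (hL : IsOrthantOfRank L k) (h : L ⊆ S) : k ≤ orthRank S :=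
  le_csSup (bddAbove_orthantRanks S) ⟨L, hL, h⟩

lemma orthRank_mono (h : S ⊆ T) : orthRank S ≤ orthRank T :=
  csSup_le' fun _ ⟨_, hL, hLS⟩ => le_orthRank hL (hLS.trans h)

lemma IsOrthantOfRank.le_of_subset (hL' : IsOrthantOfRank L' m) (hL : IsOrthantOfRank L k)
    (h : L' ⊆ L) : m ≤ k := by
  obtain ⟨ρ', rfl, rfl⟩ := hL'.exists_cellOf_eq
  obtain ⟨ρ, rfl, rfl⟩ := hL.exists_cellOf_eq
  exact cellRank_le_of_subset h

lemma IsOrthantOfRank.orthRank_eq (hL : IsOrthantOfRank L k) : orthRank L = k :=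
  le_antisymm (csSup_le' fun _ ⟨_, hL', h⟩ => hL'.le_of_subset hL h) (le_orthRank hL subset_rfl)

lemma commensurable_iff (hL : IsOrthantOfRank L k) (hL' : IsOrthantOfRank L' k) :
    Commensurable L L' ↔ ∃ M, IsOrthantOfRank M k ∧ M ⊆ L ∩ L' := by
  constructor
  · rintro ⟨⟨x, hx⟩, hrk, -⟩
    rw [hL.orthRank_eq] at hrk
    have hne : {m | ∃ M, IsOrthantOfRank M m ∧ M ⊆ L ∩ L'}.Nonempty :=
      ⟨0, {x}, isOrthantOfRank_singleton x, Set.singleton_subset_iff.mpr hx⟩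
    have := Nat.sSup_mem hne (bddAbove_orthantRanks _)
    rwa [← orthRank, ← hrk] at this
  · rintro ⟨M, hM, hsub⟩
    have hrk : orthRank (L ∩ L') = k :=
      le_antisymm (hL.orthRank_eq ▸ orthRank_mono Set.inter_subset_left) (le_orthRank hM hsub)
    exact ⟨hM.nonempty.mono hsub, hL.orthRank_eq.trans hrk.symm, hL'.orthRank_eq.trans hrk.symm⟩

lemma commensurable_of_subset (hL : IsOrthantOfRank L k) (hL' : IsOrthantOfRank L' k)
    (h : L' ⊆ L) : Commensurable L L' :=
  (commensurable_iff hL hL').mpr ⟨L', hL', Set.subset_inter h subset_rfl⟩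

lemma Commensurable.symm (h : Commensurable L L') : Commensurable L' L := by
  obtain ⟨hne, h₁, h₂⟩ := h
  rw [Set.inter_comm] at hne h₁ h₂
  exact ⟨hne, h₂, h₁⟩

lemma exists_subset_inter_of_subset (hM₁ : IsOrthantOfRank M₁ k) (hM₂ : IsOrthantOfRank M₂ k)
    (hL : IsOrthantOfRank L k) (h₁ : M₁ ⊆ L) (h₂ : M₂ ⊆ L) :
    ∃ M, IsOrthantOfRank M k ∧ M ⊆ M₁ ∩ M₂ := by
  obtain ⟨μ₁, rfl, e₁⟩ := hM₁.exists_cellOf_eq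
  obtain ⟨μ₂, rfl, e₂⟩ := hM₂.exists_cellOf_eq
  obtain ⟨ρ, rfl, e⟩ := hL.exists_cellOf_eq
  set b : Fin N → ℤ := fun i => (μ₂ i).1
  refine ⟨cellOf (deepen μ₁ b), (cellRank_deepen μ₁ b).trans e₁ ▸ isOrthantOfRank_cellOf _,
    Set.subset_inter (cellOf_deepen_subset μ₁ b) ?_⟩
  exact cellOf_deepen_subset_of_subset h₁ h₂ (e₁.trans e.symm) (e₂.trans e.symm)

lemma Commensurable.trans (h₁₂ : Commensurable L₁ L₂) (h₂₃ : Commensurable L₂ L₃)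
    (hL₁ : IsOrthantOfRank L₁ k) (hL₂ : IsOrthantOfRank L₂ k) (hL₃ : IsOrthantOfRank L₃ k) :
    Commensurable L₁ L₃ := by
  obtain ⟨M₁, hM₁, hsub₁⟩ := (commensurable_iff hL₁ hL₂).mp h₁₂
  obtain ⟨M₂, hM₂, hsub₂⟩ := (commensurable_iff hL₂ hL₃).mp h₂₃
  obtain ⟨M, hM, hsub⟩ := exists_subset_inter_of_subset hM₁ hM₂ hL₂
    (hsub₁.trans Set.inter_subset_right) (hsub₂.trans Set.inter_subset_left)
  exact (commensurable_iff hL₁ hL₃).mpr ⟨M, hM, Set.subset_inter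
    (hsub.trans (Set.inter_subset_left.trans (hsub₁.trans Set.inter_subset_left)))
    (hsub.trans (Set.inter_subset_right.trans (hsub₂.trans Set.inter_subset_right)))⟩

lemma exists_finset_cellOf_eq {𝓣 : Set (Set (Fin N → ℤ))} (hfin : 𝓣.Finite)
    (h𝓣 : ∀ T ∈ 𝓣, IsOrthant T) : ∃ 𝓓 : Finset (CellDesc N), 𝓣 = cellOf '' ↑𝓓 := by
  classical
  have : ∀ T : 𝓣, ∃ ρ, cellOf ρ = T.1 := fun T => by
    obtain ⟨_, hT⟩ := h𝓣 T T.2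
    obtain ⟨ρ, hρ, -⟩ := hT.exists_cellOf_eq
    exact ⟨ρ, hρ.symm⟩
  choose d hd using this
  have := hfin.fintype
  refine ⟨Finset.univ.image d, ?_⟩
  ext T
  simp only [Finset.coe_image, Finset.coe_univ, Set.image_univ, ← Set.range_comp]
  exact ⟨fun hT => ⟨⟨T, hT⟩, hd _⟩, by rintro ⟨T', rfl⟩; simp [hd]⟩

lemma IsOrthantOfRank.exists_subset_subset_or_disjoint (hL : IsOrthantOfRank L k)
    {𝓣 : Set (Set (Fin N → ℤ))} (hfin : 𝓣.Finite) (h𝓣 : ∀ T ∈ 𝓣, IsOrthant T) :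
    ∃ L', IsOrthantOfRank L' k ∧ L' ⊆ L ∧ ∀ T ∈ 𝓣, L' ⊆ T ∨ Disjoint L' T := by
  obtain ⟨ρ, rfl, rfl⟩ := hL.exists_cellOf_eq
  obtain ⟨𝓓, rfl⟩ := exists_finset_cellOf_eq hfin h𝓣
  obtain ⟨μ, hrk, hsub, hμ⟩ := exists_subcell_subset_or_disjoint ρ 𝓓
  exact ⟨cellOf μ, hrk ▸ isOrthantOfRank_cellOf μ, hsub, by simpa using hμ⟩

lemma orthRank_sUnion_le {𝓣 : Set (Set (Fin N → ℤ))} (hfin : 𝓣.Finite)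
    (h𝓣 : ∀ T ∈ 𝓣, ∃ m ≤ k, IsOrthantOfRank T m) : orthRank (⋃₀ 𝓣) ≤ k := by
  refine csSup_le' fun m ⟨L, hL, hsub⟩ => ?_
  obtain ⟨L', hL', hL'L, h⟩ := hL.exists_subset_subset_or_disjoint hfin
    fun T hT => (h𝓣 T hT).imp fun _ => And.right
  obtain ⟨x, hx⟩ := hL'.nonempty
  obtain ⟨T, hT, hxT⟩ := hsub (hL'L hx)
  obtain ⟨m', hm'k, hT'⟩ := h𝓣 T hT
  have hL'T : L' ⊆ T := (h T hT).resolve_right (Set.not_disjoint_iff.mpr ⟨x, hx, hxT⟩)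
  exact (hL'.le_of_subset hT' hL'T).trans hm'k

lemma exists_orthant_partition {𝓣 : Set (Set (Fin N → ℤ))} (hfin : 𝓣.Finite)
    (h𝓣 : ∀ T ∈ 𝓣, IsOrthant T) :
    ∃ 𝓖 : Set (Set (Fin N → ℤ)), 𝓖.Finite ∧ (∀ Q ∈ 𝓖, IsOrthant Q) ∧ ⋃₀ 𝓖 = Set.univ ∧
      𝓖.PairwiseDisjoint id ∧ ∀ Q ∈ 𝓖, ∀ T ∈ 𝓣, Q ⊆ T ∨ Disjoint Q T := by
  obtain ⟨𝓓, rfl⟩ := exists_finset_cellOf_eq hfin h𝓣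
  obtain ⟨𝓖, hcover, hdisj, hrefine⟩ := exists_cell_partition 𝓓
  refine ⟨cellOf '' ↑𝓖, 𝓖.finite_toSet.image _, ?_, ?_, ?_, ?_⟩
  · rintro _ ⟨Q, -, rfl⟩
    exact ⟨_, isOrthantOfRank_cellOf Q⟩
  · exact Set.eq_univ_of_forall fun x =>
      let ⟨Q, hQ, hx⟩ := hcover x
      ⟨cellOf Q, Set.mem_image_of_mem _ hQ, hx⟩
  · rintro _ ⟨Q, hQ, rfl⟩ _ ⟨Q', hQ', rfl⟩ hne
    exact hdisj Q hQ Q' hQ' (ne_of_apply_ne _ hne)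
  · rintro _ ⟨Q, hQ, rfl⟩ _ ⟨ρ, hρ, rfl⟩
    exact hrefine Q hQ ρ hρ

end OrthantRank

section Isometries

variable {N : ℕ} {L L' : Set (Fin N → ℤ)} {k : ℕ} {f : (Fin N → ℤ) → (Fin N → ℤ)}

open Matrix

lemma IsOrthMat.transpose {A : Matrix (Fin N) (Fin N) ℤ} (hA : IsOrthMat A) : IsOrthMat Aᵀ := by
  rw [IsOrthMat, transpose_transpose]
  exact mul_eq_one_comm.mp hA

lemma IsOrthMat.mul {A B : Matrix (Fin N) (Fin N) ℤ} (hA : IsOrthMat A) (hB : IsOrthMat B) :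
    IsOrthMat (A * B) := by
  rw [IsOrthMat, transpose_mul, mul_assoc, ← mul_assoc B, hB, one_mul, hA]

lemma IsometricOn.mono (hf : IsometricOn f L) (h : L' ⊆ L) : IsometricOn f L' :=
  let ⟨a, A, hA, hfA⟩ := hf
  ⟨a, A, hA, fun x hx => hfA x (h hx)⟩

lemma IsometricOn.congr {g : (Fin N → ℤ) → (Fin N → ℤ)} (hf : IsometricOn f L) (h : L.EqOn f g) :
    IsometricOn g L :=
  let ⟨a, A, hA, hfA⟩ := hf
  ⟨a, A, hA, fun x hx => (h hx).symm.trans (hfA x hx)⟩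

lemma isometricOn_of_eqOn_id (h : ∀ x ∈ L, f x = x) : IsometricOn f L :=
  ⟨0, 1, by simp [IsOrthMat], fun x hx => by simp [h x hx]⟩

lemma IsOrthantOfRank.image (hL : IsOrthantOfRank L k) (hf : IsometricOn f L) :
    IsOrthantOfRank (f '' L) k := by
  obtain ⟨a, A, Y, hA, hY, rfl⟩ := hL
  obtain ⟨b, B, hB, hfB⟩ := hf
  refine ⟨b + B *ᵥ a, B * A, Y, hB.mul hA, hY, ?_⟩
  rw [Set.image_image]
  refine Set.image_congr fun v hv => ?_
  rw [hfB _ (Set.mem_image_of_mem _ hv), mulVec_add, mulVec_mulVec, add_assoc]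

lemma IsometricOn.inv_image {g : Equiv.Perm (Fin N → ℤ)} (hg : IsometricOn g L) :
    IsometricOn ⇑g⁻¹ (g '' L) := by
  obtain ⟨b, B, hB, hgB⟩ := hg
  refine ⟨-(Bᵀ *ᵥ b), Bᵀ, hB.transpose, ?_⟩
  rintro _ ⟨x, hx, rfl⟩
  rw [Equiv.Perm.inv_def, Equiv.symm_apply_apply, hgB x hx, mulVec_add, mulVec_mulVec,
    mul_eq_one_comm.mp hB, one_mulVec, neg_add_cancel_left]

lemma exists_perm_mem_iff_of_card_eq {α : Type*} [Fintype α] {Y Y' : Finset α}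
    (h : Y.card = Y'.card) : ∃ τ : Equiv.Perm α, ∀ i, i ∈ Y' ↔ τ i ∈ Y := by
  classical
  have e₁ : {i // i ∈ Y'} ≃ {i // i ∈ Y} := Finset.equivOfCardEq h.symm
  have e₂ : {i // i ∉ Y'} ≃ {i // i ∉ Y} := Fintype.equivOfCardEq (by
    rw [Fintype.card_subtype_compl, Fintype.card_subtype_compl, Fintype.card_coe,
      Fintype.card_coe, h])
  refine ⟨Equiv.subtypeCongr e₁ e₂, fun i => ?_⟩
  by_cases hi : i ∈ Y'
  · simp [Equiv.subtypeCongr, Equiv.sumCompl, hi]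
  · simpa [Equiv.subtypeCongr, Equiv.sumCompl, hi] using (e₂ ⟨i, hi⟩).2

lemma image_stdFace_signedPermMatrix {τ : Equiv.Perm (Fin N)} {Y Y' : Finset (Fin N)}
    (hτ : ∀ i, i ∈ Y' ↔ τ i ∈ Y) : (signedPermMatrix τ 1 *ᵥ ·) '' stdFace N Y = stdFace N Y' := by
  ext w
  simp only [Set.mem_image, stdFace, Set.mem_ofPred_eq]
  constructor
  · rintro ⟨v, ⟨hv, hvY⟩, rfl⟩
    simp only [signedPermMatrix_mulVec, Pi.one_apply, one_mul]
    exact ⟨fun i => hv _, fun i hi => hvY _ ((hτ i).not.mp hi)⟩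
  · rintro ⟨hw, hwY⟩
    refine ⟨fun j => w (τ.symm j), ⟨fun j => hw _, fun j hj => hwY _ ?_⟩, funext fun i => ?_⟩
    · rwa [hτ, τ.apply_symm_apply]
    · simp [signedPermMatrix_mulVec]

lemma exists_perm_isometricOn_image_eq (hL : IsOrthantOfRank L k) (hL' : IsOrthantOfRank L' k) :
    ∃ φ : Equiv.Perm (Fin N → ℤ), IsometricOn φ L ∧ φ '' L = L' := by
  obtain ⟨a, A, Y, hA, hY, rfl⟩ := hL
  obtain ⟨a', A', Y', hA', hY', rfl⟩ := hL'
  obtain ⟨τ, hτ⟩ := exists_perm_mem_iff_of_card_eq (hY.trans hY'.symm)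
  have hP := isOrthMat_signedPermMatrix τ (s := 1) fun _ => Or.inl rfl
  set B := A' * signedPermMatrix τ 1 * Aᵀ
  have hB : IsOrthMat B := (hA'.mul hP).mul hA.transpose
  set b := a' - B *ᵥ a
  let φ : Equiv.Perm (Fin N → ℤ) :=
    { toFun := fun x => b + B *ᵥ x
      invFun := fun y => Bᵀ *ᵥ (y - b)
      left_inv := fun x => by simp [mulVec_mulVec, mul_eq_one_comm.mp hB]
      right_inv := fun y => by simp [mulVec_mulVec, show B * Bᵀ = 1 from hB] }
  refine ⟨φ, ⟨b, B, hB, fun _ _ => rfl⟩, ?_⟩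
  rw [← image_stdFace_signedPermMatrix hτ, Set.image_image, Set.image_image]
  refine Set.image_congr fun v _ => ?_
  have hBA : B * A = A' * signedPermMatrix τ 1 := by
    rw [mul_assoc, mul_eq_one_comm.mp hA, mul_one]
  simp only [φ, Equiv.coe_fn_mk, b, mulVec_add, mulVec_mulVec, hBA]
  abel

lemma Commensurable.image {L₁ L₂ : Set (Fin N → ℤ)}
    (h : Commensurable L₁ L₂) (hL₁ : IsOrthantOfRank L₁ k) (hL₂ : IsOrthantOfRank L₂ k)
    (hf₁ : IsometricOn f L₁) (hf₂ : IsometricOn f L₂) : Commensurable (f '' L₁) (f '' L₂) := by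
  obtain ⟨M, hM, hsub⟩ := (commensurable_iff hL₁ hL₂).mp h
  exact (commensurable_iff (hL₁.image hf₁) (hL₂.image hf₂)).mpr
    ⟨f '' M, hM.image (hf₁.mono (hsub.trans Set.inter_subset_left)),
      (Set.image_mono hsub).trans (Set.image_inter_subset _ _ _)⟩

end Isometries

section PeiMaps

variable {N : ℕ} {S L : Set (Fin N → ℤ)} {k : ℕ} {f : (Fin N → ℤ) → (Fin N → ℤ)}
  {g : Equiv.Perm (Fin N → ℤ)}

lemma isPeiMapOn_of_isometricOn (hS : IsOrthohedral S) {𝓕 : Set (Set (Fin N → ℤ))}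
    (hfin : 𝓕.Finite) (h𝓕 : ∀ L ∈ 𝓕, IsOrthant L) (hf : ∀ L ∈ 𝓕, IsometricOn f L)
    (hid : ∀ x ∉ ⋃₀ 𝓕, f x = x) : IsPeiMapOn S f := by
  obtain ⟨𝓐, hA, hAo, rfl⟩ := hS
  obtain ⟨𝓖, hG, hGo, hcover, hdisj, hrefine⟩ :=
    exists_orthant_partition (hA.union hfin) fun L hL => hL.elim (hAo L) (h𝓕 L)
  have hmeet : ∀ Q ∈ 𝓖, ∀ L ∈ 𝓐 ∪ 𝓕, ∀ x ∈ Q, x ∈ L → Q ⊆ L := fun Q hQ L hL x hxQ hxL =>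
    (hrefine Q hQ L hL).resolve_right (Set.not_disjoint_iff.mpr ⟨x, hxQ, hxL⟩)
  refine ⟨{Q ∈ 𝓖 | Q ⊆ ⋃₀ 𝓐}, hG.subset (Set.sep_subset _ _), fun Q hQ => hGo Q hQ.1, ?_,
    hdisj.subset (Set.sep_subset _ _), fun Q hQ => ?_⟩
  · refine subset_antisymm (fun x ⟨L, hL, hxL⟩ => ?_) (Set.sUnion_subset fun Q hQ => hQ.2)
    obtain ⟨Q, hQ, hxQ⟩ := Set.mem_sUnion.mp (hcover.symm ▸ Set.mem_univ x)
    exact ⟨Q, ⟨hQ, (hmeet Q hQ L (Or.inl hL) x hxQ hxL).trans (Set.subset_sUnion_of_mem hL)⟩, hxQ⟩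
  · replace hQ := hQ.1
    by_cases h : ∃ L ∈ 𝓕, Q ⊆ L
    · obtain ⟨L, hL, hQL⟩ := h
      exact (hf L hL).mono hQL
    · refine isometricOn_of_eqOn_id fun x hxQ => hid x fun ⟨L, hL, hxL⟩ => h ?_
      exact ⟨L, hL, hmeet Q hQ L (Or.inr hL) x hxQ hxL⟩

lemma IsPeiMapOn.exists_isometricOn_subset (hf : IsPeiMapOn S f) (hL : IsOrthantOfRank L k)
    (hLS : L ⊆ S) : ∃ L', IsOrthantOfRank L' k ∧ L' ⊆ L ∧ IsometricOn f L' := by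
  obtain ⟨𝓛, hfin, horth, rfl, -, hiso⟩ := hf
  obtain ⟨L', hL', hsub, h⟩ := hL.exists_subset_subset_or_disjoint hfin horth
  obtain ⟨x, hx⟩ := hL'.nonempty
  obtain ⟨P, hP, hxP⟩ := hLS (hsub hx)
  exact ⟨L', hL', hsub,
    (hiso P hP).mono ((h P hP).resolve_right (Set.not_disjoint_iff.mpr ⟨x, hx, hxP⟩))⟩

lemma IsPeiPerm.image_eq (hg : IsPeiPerm S g) : g '' S = S := by
  refine subset_antisymm ?_ fun y hy => ⟨g⁻¹ y, ?_, by simp⟩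
  · rintro _ ⟨x, hx, rfl⟩
    by_contra hgx
    rw [g.injective (hg.2 _ hgx)] at hgx
    exact hgx hx
  · by_contra hx
    have := hg.2 _ hx
    rw [Equiv.Perm.inv_def, Equiv.apply_symm_apply] at this
    exact hx (this ▸ hy)

lemma IsPeiPerm.image_mem_germSet (hg : IsPeiPerm S g) (hL : L ∈ germSet S k)
    (hiso : IsometricOn g L) : ⇑g '' L ∈ germSet S k :=
  ⟨hL.1.image hiso, hg.image_eq ▸ Set.image_mono hL.2⟩

lemma IsPeiPerm.inv (hg : IsPeiPerm S g) : IsPeiPerm S g⁻¹ := by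
  obtain ⟨⟨𝓛, hfin, horth, hS, hdisj, hiso⟩, hfix⟩ := hg
  refine ⟨⟨Set.image g '' 𝓛, hfin.image _, ?_, ?_, ?_, ?_⟩, fun x hx => ?_⟩
  · rintro _ ⟨L, hL, rfl⟩
    obtain ⟨m, hm⟩ := horth L hL
    exact ⟨m, hm.image (hiso L hL)⟩
  · rw [← Set.image_sUnion, ← hS, IsPeiPerm.image_eq ⟨⟨𝓛, hfin, horth, hS, hdisj, hiso⟩, hfix⟩]
  · rintro _ ⟨L, hL, rfl⟩ _ ⟨L', hL', rfl⟩ hne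
    exact (Set.disjoint_image_iff g.injective).mpr (hdisj hL hL' fun h => hne (h ▸ rfl))
  · rintro _ ⟨L, hL, rfl⟩
    exact (hiso L hL).inv_image
  · exact g.symm_apply_eq.mpr (hfix x hx).symm

end PeiMaps

section GermAction

variable {N : ℕ} {S : Set (Fin N → ℤ)} {k : ℕ} {g : Equiv.Perm (Fin N → ℤ)}

lemma germOf_eq_of_commensurable {L L' : germSet S k} (h : Commensurable L.1 L'.1) :
    germOf S k L = germOf S k L' :=
  Quot.sound h

lemma germOf_eq_of_subset {L L' : germSet S k} (h : L'.1 ⊆ L.1) : germOf S k L = germOf S k L' :=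
  germOf_eq_of_commensurable (commensurable_of_subset L.2.1 L'.2.1 h)

/-- Stronger than `InducesGermMap`: `σ` is prescribed by every representative on which `g` is
isometric, which makes the maps for `g` and `g⁻¹` mutually inverse. -/
def SendsGermsToImages (S : Set (Fin N → ℤ)) (k : ℕ) (g : Equiv.Perm (Fin N → ℤ))
    (σ : Germ S k → Germ S k) : Prop :=
  ∀ L M : germSet S k, IsometricOn g L.1 → M.1 = g '' L.1 → σ (germOf S k L) = germOf S k M

lemma exists_sendsGermsToImages (hg : IsPeiPerm S g) :
    ∃ σ : Germ S k → Germ S k, SendsGermsToImages S k g σ := by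
  have hsub : ∀ L : germSet S k, ∃ L' : germSet S k, L'.1 ⊆ L.1 ∧ IsometricOn g L'.1 := by
    intro L
    obtain ⟨L', hL', hsub, hiso⟩ := hg.1.exists_isometricOn_subset L.2.1 L.2.2
    exact ⟨⟨L', hL', hsub.trans L.2.2⟩, hsub, hiso⟩
  choose sub hsub hiso using hsub
  let img (L : germSet S k) : germSet S k :=
    ⟨g '' (sub L).1, hg.image_mem_germSet (sub L).2 (hiso L)⟩
  have key : ∀ L M M' : germSet S k, Commensurable L.1 M.1 → IsometricOn g M.1 →
      M'.1 = g '' M.1 → germOf S k (img L) = germOf S k M' := by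
    intro L M M' h hM hM'
    refine germOf_eq_of_commensurable ?_
    rw [hM']
    refine Commensurable.image ?_ (sub L).2.1 M.2.1 (hiso L) hM
    exact (commensurable_of_subset L.2.1 (sub L).2.1 (hsub L)).symm.trans h
      (sub L).2.1 L.2.1 M.2.1
  refine ⟨Quot.lift (fun L => germOf S k (img L)) fun L₁ L₂ h => ?_,
    fun L M hL hM => key L L M (commensurable_of_subset L.2.1 L.2.1 subset_rfl) hL hM⟩
  refine key L₁ (sub L₂) (img L₂) ?_ (hiso L₂) rfl
  exact h.trans (commensurable_of_subset L₂.2.1 (sub L₂).2.1 (hsub L₂)) L₁.2.1 L₂.2.1 (sub L₂).2.1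

lemma SendsGermsToImages.apply_eq_self {σ : Germ S k → Germ S k}
    (hσ : SendsGermsToImages S k g σ) {L : germSet S k} (hfix : ∀ x ∈ L.1, g x = x) :
    σ (germOf S k L) = germOf S k L :=
  hσ L L (isometricOn_of_eqOn_id hfix) (by rw [Set.image_congr hfix, Set.image_id'])

lemma SendsGermsToImages.inducesGermMap {σ : Germ S k → Germ S k}
    (hσ : SendsGermsToImages S k g σ) (hg : IsPeiPerm S g) : InducesGermMap S k g σ := by
  intro L
  obtain ⟨L', hL', hsub, hiso⟩ := hg.1.exists_isometricOn_subset L.2.1 L.2.2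
  let R : germSet S k := ⟨L', hL', hsub.trans L.2.2⟩
  let M : germSet S k := ⟨g '' L', hg.image_mem_germSet R.2 hiso⟩
  refine ⟨L', M, hL', hsub, commensurable_of_subset L.2.1 hL' hsub, rfl, ?_⟩
  rw [germOf_eq_of_subset (L' := R) hsub]
  exact hσ R M hiso rfl

lemma SendsGermsToImages.leftInverse {σ σ' : Germ S k → Germ S k}
    (hσ : SendsGermsToImages S k g σ) (hσ' : SendsGermsToImages S k g⁻¹ σ')
    (hg : IsPeiPerm S g) : Function.LeftInverse σ' σ := by
  rintro ⟨L⟩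
  obtain ⟨L', hL', hsub, hiso⟩ := hg.1.exists_isometricOn_subset L.2.1 L.2.2
  let R : germSet S k := ⟨L', hL', hsub.trans L.2.2⟩
  let M : germSet S k := ⟨g '' L', hg.image_mem_germSet R.2 hiso⟩
  change σ' (σ (germOf S k L)) = germOf S k L
  rw [germOf_eq_of_subset (L' := R) hsub, hσ R M hiso rfl,
    hσ' M R hiso.inv_image (by simp [M, R, Set.image_image])]

lemma exists_perm_sendsGermsToImages (hg : IsPeiPerm S g) :
    ∃ σ : Equiv.Perm (Germ S k), SendsGermsToImages S k g σ := by
  obtain ⟨σ, hσ⟩ := exists_sendsGermsToImages (k := k) hg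
  obtain ⟨σ', hσ'⟩ := exists_sendsGermsToImages (k := k) hg.inv
  have hσ'' : SendsGermsToImages S k g⁻¹⁻¹ σ := (inv_inv g).symm ▸ hσ
  exact ⟨⟨σ, σ', hσ.leftInverse hσ' hg, hσ'.leftInverse hσ'' hg.inv⟩, hσ⟩

/-- A germ with a full-rank suborthant off the support `T` is fixed; the others are germs of the
finitely many rank-`k` orthants making up `T`. -/
lemma SendsGermsToImages.finite_moved {σ : Germ S k → Germ S k}
    (hσ : SendsGermsToImages S k g σ) {T : Set (Fin N → ℤ)} (hT : IsOrthohedral T)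
    (hTk : orthRank T ≤ k) (hgT : ∀ x ∉ T, g x = x) : {γ | σ γ ≠ γ}.Finite := by
  obtain ⟨𝓣, hfin, horth, rfl⟩ := hT
  let germsOf (T : Set (Fin N → ℤ)) : Set (Germ S k) :=
    {γ | ∃ L : germSet S k, germOf S k L = γ ∧ Commensurable L.1 T ∧ IsOrthantOfRank T k}
  have hsingle : ∀ T, (germsOf T).Subsingleton := by
    rintro T _ ⟨L₁, rfl, h₁, hT⟩ _ ⟨L₂, rfl, h₂, -⟩
    exact germOf_eq_of_commensurable (h₁.trans h₂.symm L₁.2.1 hT L₂.2.1)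
  refine (hfin.biUnion fun T _ => (hsingle T).finite).subset fun γ hγ => ?_
  obtain ⟨L, rfl⟩ := Quot.exists_rep γ
  obtain ⟨L', hL', hsub, h⟩ := L.2.1.exists_subset_subset_or_disjoint hfin horth
  by_cases hin : ∃ T ∈ 𝓣, L' ⊆ T
  · obtain ⟨T, hT, hL'T⟩ := hin
    obtain ⟨m, hm⟩ := horth T hT
    obtain rfl : m = k := le_antisymm ((le_orthRank hm (Set.subset_sUnion_of_mem hT)).trans hTk)
      (hL'.le_of_subset hm hL'T)
    exact Set.mem_biUnion hT
      ⟨L, rfl, (commensurable_iff L.2.1 hm).mpr ⟨L', hL', Set.subset_inter hsub hL'T⟩, hm⟩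
  · let R : germSet S k := ⟨L', hL', hsub.trans L.2.2⟩
    have hfix : ∀ x ∈ L', g x = x := fun x hx => hgT x fun ⟨T, hT, hxT⟩ =>
      Set.disjoint_left.mp ((h T hT).resolve_left fun h' => hin ⟨T, hT, h'⟩) hx hxT
    refine absurd ?_ hγ
    change σ (germOf S k L) = germOf S k L
    rw [germOf_eq_of_subset (L' := R) hsub]
    exact hσ.apply_eq_self hfix

end GermAction

section Transitivity

open Function

lemma exists_perm_eqOn_pieces {α ι : Type*} {A : ι → Set α} (hA : Pairwise (Disjoint on A))
    (π : Equiv.Perm ι) (φ : ι → Equiv.Perm α) (hφ : ∀ i, φ i '' A i = A (π i)) :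
    ∃ g : Equiv.Perm α, (∀ i, ∀ x ∈ A i, g x = φ i x) ∧ ∀ x, (∀ i, x ∉ A i) → g x = x := by
  classical
  have huniq : ∀ {i j x}, x ∈ A i → x ∈ A j → i = j := fun hi hj =>
    by_contra fun h => Set.disjoint_left.mp (hA h) hi hj
  let toFun (x : α) : α := if h : ∃ i, x ∈ A i then φ h.choose x else x
  let invFun (y : α) : α := if h : ∃ j, y ∈ A j then (φ (π.symm h.choose)).symm y else y
  have toFun_eq : ∀ i, ∀ x ∈ A i, toFun x = φ i x := fun i x hx => by
    have h : ∃ i, x ∈ A i := ⟨i, hx⟩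
    simp only [toFun, dif_pos h, huniq h.choose_spec hx]
  have invFun_eq : ∀ i, ∀ y ∈ A (π i), invFun y = (φ i).symm y := fun i y hy => by
    have h : ∃ j, y ∈ A j := ⟨π i, hy⟩
    simp only [invFun, dif_pos h, huniq h.choose_spec hy, Equiv.symm_apply_apply]
  have hmaps : ∀ i, ∀ x ∈ A i, φ i x ∈ A (π i) := fun i x hx => hφ i ▸ Set.mem_image_of_mem _ hx
  have hmaps' : ∀ i, ∀ y ∈ A (π i), (φ i).symm y ∈ A i := fun i y hy => by
    obtain ⟨x, hx, rfl⟩ := (hφ i).symm ▸ hy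
    simpa using hx
  refine ⟨⟨toFun, invFun, fun x => ?_, fun y => ?_⟩, toFun_eq,
    fun x hx => dif_neg (not_exists.mpr hx)⟩
  · by_cases h : ∃ i, x ∈ A i
    · obtain ⟨i, hx⟩ := h
      rw [toFun_eq i x hx, invFun_eq i _ (hmaps i x hx), Equiv.symm_apply_apply]
    · simp only [toFun, invFun, dif_neg h]
  · by_cases h : ∃ j, y ∈ A j
    · obtain ⟨j, hy⟩ := h
      obtain ⟨i, rfl⟩ := π.surjective j
      rw [invFun_eq i y hy, toFun_eq i _ (hmaps' i y hy), Equiv.apply_symm_apply]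
    · simp only [toFun, invFun, dif_neg h]

lemma exists_perm_extend {α : Type*} [DecidableEq α] {F F' : Finset α} (e : F ≃ F') :
    ∃ π : Equiv.Perm ↥(F ∪ F'), ∀ γ : F, (π ⟨γ, Finset.mem_union_left _ γ.2⟩ : α) = e γ := by
  let e' : {x : ↥(F ∪ F') // ↑x ∈ F} ≃ {x : ↥(F ∪ F') // ↑x ∈ F'} :=
    (Equiv.subtypeSubtypeEquivSubtype (Finset.mem_union_left _)).trans
      (e.trans (Equiv.subtypeSubtypeEquivSubtype (Finset.mem_union_right _)).symm)
  exact ⟨e'.extendSubtype, fun γ => by rw [Equiv.extendSubtype_apply_of_mem e' _ γ.2]; rfl⟩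

variable {N : ℕ} {S : Set (Fin N → ℤ)} {k : ℕ}

lemma exists_pairwiseDisjoint_reps (G : Finset (Germ S k)) :
    ∃ C : Germ S k → germSet S k, (∀ γ ∈ G, germOf S k (C γ) = γ) ∧
      (G : Set (Germ S k)).PairwiseDisjoint fun γ => (C γ).1 := by
  classical
  induction G using Finset.induction_on with
  | empty => exact ⟨fun γ => γ.out, by simp, by simp⟩
  | insert γ₀ G hγ₀ ih =>
    obtain ⟨C, hC, hdisj⟩ := ih
    obtain ⟨L, hL⟩ : ∃ L, germOf S k L = γ₀ := Quot.exists_rep γ₀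
    obtain ⟨L', hL', hsub, h⟩ := L.2.1.exists_subset_subset_or_disjoint
      (G.finite_toSet.image fun γ => (C γ).1) (by rintro _ ⟨γ, -, rfl⟩; exact ⟨k, (C γ).2.1⟩)
    let R : germSet S k := ⟨L', hL', hsub.trans L.2.2⟩
    have hR : germOf S k R = γ₀ := hL ▸ (germOf_eq_of_subset hsub).symm
    have hRdisj : ∀ γ ∈ G, Disjoint L' (C γ).1 := fun γ hγ =>
      (h _ ⟨γ, hγ, rfl⟩).resolve_left fun hL'C => hγ₀ <| by
        rwa [← hR, ← germOf_eq_of_subset (L' := R) hL'C, hC γ hγ]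
    refine ⟨update C γ₀ R, fun γ hγ => ?_, ?_⟩
    · rcases Finset.mem_insert.mp hγ with rfl | hγ
      · simpa using hR
      · rw [update_of_ne (ne_of_mem_of_not_mem hγ hγ₀)]
        exact hC γ hγ
    · rw [Finset.coe_insert, Set.pairwiseDisjoint_insert]
      refine ⟨fun γ hγ γ' hγ' hne => ?_, fun γ hγ hne => ?_⟩
      · simpa only [onFun, update_of_ne (ne_of_mem_of_not_mem hγ hγ₀),
          update_of_ne (ne_of_mem_of_not_mem hγ' hγ₀)] using hdisj hγ hγ' hne
      · simpa [update_of_ne (ne_of_mem_of_not_mem hγ hγ₀)] using hRdisj γ hγ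

lemma exists_isPeiPerm_inducing (hS : IsOrthohedral S) (G : Finset (Germ S k))
    (π : Equiv.Perm G) : ∃ g : Equiv.Perm (Fin N → ℤ), IsPeiPerm S g ∧ rankLE g k ∧
      ∀ σ, SendsGermsToImages S k g σ → ∀ γ : G, σ γ = π γ := by
  obtain ⟨C, hCγ, hCdisj⟩ := exists_pairwiseDisjoint_reps G
  choose φ hφiso hφimg using fun γ : G => exists_perm_isometricOn_image_eq (C γ).2.1 (C (π γ)).2.1
  obtain ⟨g, hgφ, hgid⟩ := exists_perm_eqOn_pieces (A := fun γ : G => (C γ).1)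
    (fun γ γ' h => hCdisj γ.2 γ'.2 (Subtype.coe_injective.ne h)) π φ hφimg
  let 𝓓 := Set.range fun γ : G => (C γ).1
  have hgD : ∀ x ∉ ⋃₀ 𝓓, g x = x := fun x hx =>
    hgid x fun γ hxγ => hx ⟨_, ⟨γ, rfl⟩, hxγ⟩
  have hgiso : ∀ γ : G, IsometricOn g (C γ).1 := fun γ =>
    (hφiso γ).congr fun x hx => (hgφ γ x hx).symm
  have h𝓓 : ∀ L ∈ 𝓓, IsOrthantOfRank L k := by
    rintro _ ⟨γ, rfl⟩
    exact (C γ).2.1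
  have hpei : IsPeiPerm S g := by
    refine ⟨isPeiMapOn_of_isometricOn hS (Set.finite_range _) (fun L hL => ⟨k, h𝓓 L hL⟩)
      (Set.forall_mem_range.mpr hgiso) hgD, fun x hx => hgD x ?_⟩
    rintro ⟨_, ⟨γ, rfl⟩, hxγ⟩
    exact hx ((C γ).2.2 hxγ)
  have hrank : rankLE g k :=
    ⟨⋃₀ 𝓓, ⟨𝓓, Set.finite_range _, fun L hL => ⟨k, h𝓓 L hL⟩, rfl⟩,
      orthRank_sUnion_le (Set.finite_range _) fun L hL => ⟨k, le_rfl, h𝓓 L hL⟩, hgD⟩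
  refine ⟨g, hpei, hrank, fun σ hσ γ => ?_⟩
  rw [← hCγ γ γ.2, ← hCγ (π γ) (π γ).2]
  exact hσ _ _ (hgiso γ) ((Set.image_congr (hgφ γ)).trans (hφimg γ)).symm

end Transitivity

/-- `G_k(S)` acts on the rank-`k` germs by finitary permutations, and this
action is highly transitive. -/
theorem stmt8 {N : ℕ} (S : Set (Fin N → ℤ)) (hS : IsOrthohedral S) (k : ℕ) :
    (∀ g : Equiv.Perm (Fin N → ℤ), IsPeiPerm S g → rankLE g k →
      ∃ σ : Equiv.Perm (Germ S k), InducesGermMap S k g ⇑σ ∧ {γ | σ γ ≠ γ}.Finite) ∧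
    (∀ (F F' : Finset (Germ S k)) (e : ↥F ≃ ↥F'),
      ∃ (g : Equiv.Perm (Fin N → ℤ)) (σ : Equiv.Perm (Germ S k)),
        IsPeiPerm S g ∧ rankLE g k ∧ InducesGermMap S k g ⇑σ ∧
        ∀ γ : ↥F, σ (γ : Germ S k) = ((e γ : ↥F') : Germ S k)) := by
  classical
  refine ⟨fun g hg ⟨T, hT, hTk, hgT⟩ => ?_, fun F F' e => ?_⟩
  · obtain ⟨σ, hσ⟩ := exists_perm_sendsGermsToImages (k := k) hg
    exact ⟨σ, hσ.inducesGermMap hg, hσ.finite_moved hT hTk hgT⟩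
  · obtain ⟨π, hπ⟩ := exists_perm_extend e
    obtain ⟨g, hg, hgk, hgπ⟩ := exists_isPeiPerm_inducing hS (F ∪ F') π
    obtain ⟨σ, hσ⟩ := exists_perm_sendsGermsToImages (k := k) hg
    exact ⟨g, σ, hg, hgk, hσ.inducesGermMap hg, fun γ => (hgπ σ hσ _).trans (hπ γ)⟩

end PeiPaper
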